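/- Let k ≥ 2 and 1 ≤ l ≤ k − 1 be integers. There is a constant C = C(k, l) > 0 such that for every n and every pair of distinct vertices a, b ∈ Fin n, the number of ordered pairs (P₁, P₂) of paths of length k between a and b in the complete graph on Fin n whose edge sets have exactly l edges in common is at most C · n^{2k−2−l}. -/

import Mathlib

/-- A path of length `l` between `a` and `b` in a graph `G`: a sequence
`a = γ₀, γ₁, …, γ_l = b` of pairwise distinct vertices in which consecutive vertices
are adjacent. -/
def IsPathBetween {V : Type*} (G : SimpleGraph V) (l : ℕ) (a b : V)
    (γ : Fin (l + 1) → V) : Prop :=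
  γ 0 = a ∧ γ (Fin.last l) = b ∧ Function.Injective γ ∧
    ∀ i : Fin l, G.Adj (γ i.castSucc) (γ i.succ)

/-- The edge set of a path `γ₀, …, γ_k`: the unordered pairs `{γ_{i−1}, γ_i}`. -/
def pathEdges {V : Type*} {k : ℕ} (γ : Fin (k + 1) → V) : Set (Sym2 V) :=
  {e | ∃ i : Fin k, e = s(γ i.castSucc, γ i.succ)}

/-!
If two paths from `a` to `b` of length `k` share `l < k` edges, then at least `l + 2` vertices of
the second path lie on the first: each of its `N` vertices off the first path spoils both incident
edges, so for `N ≥ 1` at least `N + 1` of its `k` edges are not shared, i.e. `N ≤ k - 1 - l`.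
Hence the first path is one of `n ^ (k - 1)` choices of interior vertices, and the second one is
fixed by the set of its positions lying on the first path, the vertex of the first path at each of
them, and at most `k - 1 - l` free vertices: `2 ^ (k + 1) * (k + 1) ^ (k + 1) * n ^ (k - 1 - l)`
choices.
-/

open Finset Fintype

theorem card_filter_forall_mem {ι V : Type*} [Fintype ι] [DecidableEq ι] [Fintype V]
    [DecidableEq V] (s : Finset ι) (R : ι → Finset V) :
    #{f : ι → V | ∀ i ∈ s, f i ∈ R i} = (∏ i ∈ s, #(R i)) * card V ^ (card ι - #s) := by
  have : ({f : ι → V | ∀ i ∈ s, f i ∈ R i} : Finset _) =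
      piFinset fun i => if i ∈ s then R i else univ := by
    ext f
    simp only [mem_filter, mem_univ, true_and, mem_piFinset]
    refine forall_congr' fun i => ?_
    split_ifs <;> simp [*]
  rw [this, card_piFinset, prod_apply_ite, prod_const, card_univ, ← card_compl,
    filter_notMem_eq_sdiff, ← compl_eq_univ_sdiff, filter_mem_eq_inter, univ_inter]

theorem card_filter_many_mem_le {ι V : Type*} [Fintype ι] [DecidableEq ι] [Fintype V]
    [DecidableEq V] {R : Finset V} (hR : R.Nonempty) (m : ℕ) :
    #{f : ι → V | m ≤ #{i | f i ∈ R}} ≤ 2 ^ card ι * (#R ^ card ι * card V ^ (card ι - m)) := by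
  have hcover : ({f : ι → V | m ≤ #{i | f i ∈ R}} : Finset _) ⊆
      (univ.filter fun s : Finset ι => m ≤ #s).biUnion
        fun s => {f : ι → V | ∀ i ∈ s, f i ∈ R} := fun f hf => by
    simp only [mem_filter, mem_univ, true_and, mem_biUnion] at hf ⊢
    exact ⟨_, hf, fun i hi => (mem_filter.mp hi).2⟩
  have hpiece : ∀ s ∈ univ.filter fun s : Finset ι => m ≤ #s,
      #{f : ι → V | ∀ i ∈ s, f i ∈ R} ≤ #R ^ card ι * card V ^ (card ι - m) := by
    intro s hs
    have hV : 0 < card V := card_pos_iff.mpr ⟨hR.choose⟩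
    rw [card_filter_forall_mem, prod_const]
    gcongr
    · exact hR.card_pos
    · exact s.card_le_univ
    · exact (mem_filter.mp hs).2
  calc _ ≤ _ := card_le_card hcover
    _ ≤ _ := card_biUnion_le_card_mul _ _ _ hpiece
    _ ≤ _ := by
      gcongr
      exact (card_filter_le _ _).trans (by simp)

theorem card_filter_endpoints_le {V : Type*} [Fintype V] [DecidableEq V] (k : ℕ) (a b : V) :
    #{γ : Fin (k + 1) → V | γ 0 = a ∧ γ (Fin.last k) = b} ≤ card V ^ (k - 1) := by
  have hV : 0 < card V := card_pos_iff.mpr ⟨a⟩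
  set s : Finset (Fin (k + 1)) := {0, Fin.last k}
  have hs : k + 1 - #s ≤ k - 1 := by
    rcases k with _ | k
    · simp [s]
    · rw [card_pair (Fin.last_pos.ne : (0 : Fin (k + 2)) ≠ Fin.last (k + 1))]
      omega
  calc _ ≤ #{γ : Fin (k + 1) → V | ∀ j ∈ s, γ j ∈ ({if j = 0 then a else b} : Finset V)} := by
        refine card_le_card fun γ hγ => ?_
        simp only [mem_filter, mem_univ, true_and] at hγ ⊢
        intro j hj
        rw [mem_singleton]
        split_ifs with hj0
        · exact hj0 ▸ hγ.1
        · obtain rfl : j = Fin.last k := by simpa [s, hj0] using hj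
          exact hγ.2
    _ = (∏ j ∈ s, #{if j = 0 then a else b}) * card V ^ (k + 1 - #s) := by
        convert card_filter_forall_mem s fun j => {if j = 0 then a else b}
        exact (Fintype.card_fin _).symm
    _ = card V ^ (k + 1 - #s) := by simp
    _ ≤ card V ^ (k - 1) := Nat.pow_le_pow_right hV hs

theorem card_filter_consecutive_add_two_le {k : ℕ} (p : Fin (k + 1) → Prop) [DecidablePred p]
    (h0 : p 0) (hlast : p (Fin.last k)) (hne : ∃ j, ¬ p j) :
    #{i : Fin k | p i.castSucc ∧ p i.succ} + 2 ≤ #{j | p j} := by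
  set N : Finset (Fin (k + 1)) := {j | ¬ p j}
  set bad : Finset (Fin k) := {i | ¬ (p i.castSucc ∧ p i.succ)}
  have hN : N.Nonempty := by simpa [N, Finset.Nonempty] using hne
  set m := N.max' hN
  have hm : ¬ p m := (mem_filter.mp (N.max'_mem hN)).2
  have hm_last : m ≠ Fin.last k := fun h => hm (h ▸ hlast)
  -- every vertex outside `p` spoils the edge on its left, and the rightmost one also the edge on
  -- its right
  have hsub : insert (m.castPred hm_last).succ N ⊆ bad.image Fin.succ := by
    intro j hj
    rcases mem_insert.mp hj with rfl | hj
    · exact mem_image_of_mem _ (by simp [bad, hm])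
    · have hj0 : j ≠ 0 := fun h => (mem_filter.mp hj).2 (h ▸ h0)
      refine mem_image.mpr ⟨j.pred hj0, ?_, j.succ_pred hj0⟩
      simpa [bad, N] using fun _ => (mem_filter.mp hj).2
  have hnot : (m.castPred hm_last).succ ∉ N := fun h => by
    have := N.le_max' _ h
    simp [m, Fin.le_def] at this
  have h1 := card_le_card hsub
  rw [card_insert_of_notMem hnot, card_image_of_injective _ (Fin.succ_injective _)] at h1
  have h2 : #{j | p j} + #N = k + 1 := by
    simpa only [card_univ, Fintype.card_fin] using card_filter_add_card_filter_not (s := univ) p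
  have h3 : #{i : Fin k | p i.castSucc ∧ p i.succ} + #bad = k := by
    simpa only [card_univ, Fintype.card_fin] using
      card_filter_add_card_filter_not (s := univ) fun i : Fin k => p i.castSucc ∧ p i.succ
  omega

theorem add_two_le_card_filter_mem_image_of_le_ncard_inter {V : Type*} [DecidableEq V] {k l : ℕ} (hlk : l < k)
    {γ₁ γ₂ : Fin (k + 1) → V} (h0 : γ₂ 0 ∈ univ.image γ₁)
    (hlast : γ₂ (Fin.last k) ∈ univ.image γ₁) (hl : l ≤ (pathEdges γ₁ ∩ pathEdges γ₂).ncard) :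
    l + 2 ≤ #{j | γ₂ j ∈ univ.image γ₁} := by
  set inner : Finset (Fin k) :=
    {i | γ₂ i.castSucc ∈ univ.image γ₁ ∧ γ₂ i.succ ∈ univ.image γ₁}
  have hshared : pathEdges γ₁ ∩ pathEdges γ₂ ⊆
      ↑(inner.image fun i => s(γ₂ i.castSucc, γ₂ i.succ)) := by
    rintro _ ⟨⟨i₁, rfl⟩, i, he⟩
    have hmem : ∀ x ∈ s(γ₂ i.castSucc, γ₂ i.succ), x ∈ univ.image γ₁ := fun x hx => by
      rw [← he, Sym2.mem_iff] at hx
      rcases hx with rfl | rfl <;> exact mem_image_of_mem _ (mem_univ _)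
    exact mem_image.mpr ⟨i, mem_filter.mpr ⟨mem_univ _, hmem _ (Sym2.mem_mk_left _ _),
      hmem _ (Sym2.mem_mk_right _ _)⟩, he.symm⟩
  have hl_inner : l ≤ #inner := calc
    l ≤ _ := hl
    _ ≤ _ := Set.ncard_le_ncard hshared (Set.toFinite _)
    _ ≤ #inner := by rw [Set.ncard_coe_finset]; exact card_image_le
  by_cases hall : ∀ j, γ₂ j ∈ univ.image γ₁
  · simp only [hall, filter_true, card_univ, Fintype.card_fin]
    omega
  · linarith [card_filter_consecutive_add_two_le (fun j => γ₂ j ∈ univ.image γ₁) h0 hlast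
      (not_forall.mp hall)]

theorem card_filter_pairs_le {V : Type*} [Fintype V] [DecidableEq V] (k m : ℕ) (a b : V) :
    #{P : (Fin (k + 1) → V) × (Fin (k + 1) → V) |
        P.1 0 = a ∧ P.1 (Fin.last k) = b ∧ m ≤ #{j | P.2 j ∈ univ.image P.1}} ≤
      card V ^ (k - 1) * (2 ^ (k + 1) * ((k + 1) ^ (k + 1) * card V ^ (k + 1 - m))) := by
  rw [mul_comm]
  refine (card_le_mul_card_image (f := Prod.fst) _ _ fun γ₁ hγ₁ => ?_).trans
    (Nat.mul_le_mul_left _ ((card_le_card ?_).trans (card_filter_endpoints_le k a b)))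
  · calc _ ≤ #{γ₂ : Fin (k + 1) → V | m ≤ #{j | γ₂ j ∈ univ.image γ₁}} := by
          refine card_le_card_of_injOn Prod.snd (fun P hP => ?_) fun P hP Q hQ h => ?_
          · simp only [coe_filter, mem_filter, mem_univ, true_and] at hP ⊢
            exact hP.2 ▸ hP.1.2.2
          · simp_all [Prod.ext_iff]
      _ ≤ _ := card_filter_many_mem_le (image_nonempty.mpr univ_nonempty) m
      _ ≤ _ := by
          rw [Fintype.card_fin]
          gcongr
          exact card_image_le.trans (by simp)
  · intro γ hγ
    simp_all

theorem ncard_pairs_sharing_edges_le {V : Type*} [Fintype V] [DecidableEq V] {k l : ℕ}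
    (hlk : l < k) (a b : V) :
    {P : (Fin (k + 1) → V) × (Fin (k + 1) → V) | P.1 0 = a ∧ P.1 (Fin.last k) = b ∧
        P.2 0 = a ∧ P.2 (Fin.last k) = b ∧ (pathEdges P.1 ∩ pathEdges P.2).ncard = l}.ncard ≤
      2 ^ (k + 1) * (k + 1) ^ (k + 1) * card V ^ (2 * k - 2 - l) := by
  rw [Set.ncard_eq_toFinset_card', Set.toFinset_ofPred]
  calc _ ≤ #{P : (Fin (k + 1) → V) × (Fin (k + 1) → V) |
        P.1 0 = a ∧ P.1 (Fin.last k) = b ∧ l + 2 ≤ #{j | P.2 j ∈ univ.image P.1}} := by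
        refine card_le_card fun P hP => ?_
        simp only [mem_filter, mem_univ, true_and] at hP ⊢
        obtain ⟨h10, h1l, h20, h2l, hl⟩ := hP
        refine ⟨h10, h1l, add_two_le_card_filter_mem_image_of_le_ncard_inter hlk ?_ ?_ hl.ge⟩
        · exact mem_image.mpr ⟨0, mem_univ _, h10.trans h20.symm⟩
        · exact mem_image.mpr ⟨Fin.last k, mem_univ _, h1l.trans h2l.symm⟩
    _ ≤ _ := card_filter_pairs_le k (l + 2) a b
    _ = _ := by
        rw [show 2 * k - 2 - l = (k - 1) + (k + 1 - (l + 2)) by omega, pow_add]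
        ring

theorem count_pairs_of_paths_sharing_edges_general
    (k l : ℕ) (hl1 : 1 ≤ l) (hl2 : l ≤ k - 1) :
    ∃ C : ℝ, 0 < C ∧ ∀ n : ℕ, ∀ a b : Fin n, a ≠ b →
      (Set.ncard {P : (Fin (k + 1) → Fin n) × (Fin (k + 1) → Fin n) |
          IsPathBetween (⊤ : SimpleGraph (Fin n)) k a b P.1 ∧
          IsPathBetween (⊤ : SimpleGraph (Fin n)) k a b P.2 ∧
          (pathEdges P.1 ∩ pathEdges P.2).ncard = l} : ℝ)
        ≤ C * (n : ℝ) ^ (2 * k - 2 - l) := by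
  refine ⟨2 ^ (k + 1) * (k + 1) ^ (k + 1), by positivity, fun n a b _ => ?_⟩
  have hsub : {P : (Fin (k + 1) → Fin n) × (Fin (k + 1) → Fin n) |
      IsPathBetween ⊤ k a b P.1 ∧ IsPathBetween ⊤ k a b P.2 ∧
        (pathEdges P.1 ∩ pathEdges P.2).ncard = l} ⊆
      {P | P.1 0 = a ∧ P.1 (Fin.last k) = b ∧ P.2 0 = a ∧ P.2 (Fin.last k) = b ∧
        (pathEdges P.1 ∩ pathEdges P.2).ncard = l} :=
    fun P ⟨⟨h10, h1l, _⟩, ⟨h20, h2l, _⟩, hl⟩ => ⟨h10, h1l, h20, h2l, hl⟩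
  have hbound := (Set.ncard_le_ncard hsub).trans
    (ncard_pairs_sharing_edges_le (by omega : l < k) a b)
  rw [Fintype.card_fin] at hbound
  exact_mod_cast hbound

/-- Let `k ≥ 2` and `1 ≤ l ≤ k − 1`. There is a constant `C = C(k, l) > 0` such that for
every `n` and all distinct `a, b : Fin n`, the number of ordered pairs `(P₁, P₂)` of paths
of length `k` between `a` and `b` in the complete graph on `Fin n` whose edge sets have
exactly `l` edges in common is at most `C · n^(2k−2−l)`. -/
theorem count_pairs_of_paths_sharing_edges
    (k l : ℕ) (hk : 2 ≤ k) (hl1 : 1 ≤ l) (hl2 : l ≤ k - 1) :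
    ∃ C : ℝ, 0 < C ∧ ∀ n : ℕ, ∀ a b : Fin n, a ≠ b →
      (Set.ncard {P : (Fin (k + 1) → Fin n) × (Fin (k + 1) → Fin n) |
          IsPathBetween (⊤ : SimpleGraph (Fin n)) k a b P.1 ∧
          IsPathBetween (⊤ : SimpleGraph (Fin n)) k a b P.2 ∧
          (pathEdges P.1 ∩ pathEdges P.2).ncard = l} : ℝ)
        ≤ C * (n : ℝ) ^ (2 * k - 2 - l) :=
  count_pairs_of_paths_sharing_edges_general k l hl1 hl2
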